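/- Let n ≥ 1, let w be a word over 𝒜_n, let a ∈ 𝒜_n, and let k ∈ ℕ with k ≥ 1. Then a ∈ supp(δ^{k−1}(w)) (i.e. a occurs in the k-th row of the N-tableau N(w)) if and only if there exists an index j ≤ |w| such that ↑^{k−1}_w(j) = a. -/

import Mathlib

/-- The (max-plus) tropical semiring carrier: ℝ ∪ {-∞}. -/
abbrev Trop : Type := WithBot ℝ

/-- Tropical (max-plus) matrix multiplication. -/
def tmul {m : ℕ} (A B : Matrix (Fin m) (Fin m) Trop) : Matrix (Fin m) (Fin m) Trop :=
  fun i j => Finset.univ.sup fun k => A i k + B k j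

/-- The tropical identity matrix. -/
def tropId (m : ℕ) : Matrix (Fin m) (Fin m) Trop :=
  fun i j => if i = j then (0 : Trop) else ⊥

/-- Tropical matrix power. -/
def tpow {m : ℕ} (A : Matrix (Fin m) (Fin m) Trop) : ℕ → Matrix (Fin m) (Fin m) Trop
  | 0 => tropId m
  | k + 1 => tmul A (tpow A k)

/-- A matrix is upper unitriangular if its diagonal entries are 0 (the tropical one)
and its entries below the diagonal are -∞ (the tropical zero). -/
def IsUnitriangular {m : ℕ} (A : Matrix (Fin m) (Fin m) Trop) : Prop :=
  (∀ i, A i i = 0) ∧ ∀ i j : Fin m, j < i → A i j = ⊥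

/-- For a letter `x` of `𝒜_n` (represented by `x : Fin n`, standing for the letter `x.val + 1`),
`bar x` is the matrix index corresponding to `x̄ = n + 1 - (x.val + 1)`
(indices `1, …, n+1` being represented by `Fin (n+1)`, index `i` as value `i - 1`). -/
def bar {n : ℕ} (x : Fin n) : Fin (n + 1) := ⟨n - 1 - x.val, by omega⟩

/-- The image of a letter under ρ_n. -/
def letterMat {n : ℕ} (x : Fin n) : Matrix (Fin (n + 1)) (Fin (n + 1)) Trop :=
  fun i j => if i = j then (0 : Trop) else if i ≤ bar x ∧ bar x < j then (1 : Trop) else ⊥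

/-- The homomorphism ρ_n on words over 𝒜_n. -/
def rhoList {n : ℕ} : List (Fin n) → Matrix (Fin (n + 1)) (Fin (n + 1)) Trop
  | [] => tropId (n + 1)
  | x :: xs => tmul (letterMat x) (rhoList xs)

/-- The defining relations of the stylic monoid: the Knuth relations together with
idempotency of the generators. Letters of `𝒜_n` are `Fin n` with its order. -/
inductive StylRel (n : ℕ) : FreeMonoid (Fin n) → FreeMonoid (Fin n) → Prop
  | knuth₁ (a b c : Fin n) : a ≤ b → b < c →
      StylRel n (.of a * .of c * .of b) (.of c * .of a * .of b)
  | knuth₂ (a b c : Fin n) : a < b → b ≤ c →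
      StylRel n (.of b * .of a * .of c) (.of b * .of c * .of a)
  | idem (a : Fin n) : StylRel n (.of a * .of a) (.of a)

/-- The stylic congruence on 𝒜_n^*. -/
def stylCon (n : ℕ) : Con (FreeMonoid (Fin n)) := conGen (StylRel n)

/-- The stylic monoid of rank n. -/
abbrev Styl (n : ℕ) := (stylCon n).Quotient

/-- A monoid `M` satisfies the identity `u ≈ v` if every evaluation of the variables
in `M` gives `u` and `v` the same value. -/
def Satisfies (M : Type*) [Monoid M] {σ : Type*} (u v : FreeMonoid σ) : Prop :=
  ∀ φ : FreeMonoid σ →* M, φ u = φ v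

/-- `up B a` is the smallest letter of `B` strictly greater than `a`
(`none` playing the role of ε). -/
def up {n : ℕ} (B : Finset (Fin n)) (a : Fin n) : Option (Fin n) :=
  if h : (B.filter fun b => a < b).Nonempty then some ((B.filter fun b => a < b).min' h)
  else none

/-- The map δ: `δ(ε) = ε` and `δ(w·a) = δ(w) · a↑_{supp w}`. -/
def delta {n : ℕ} (w : List (Fin n)) : List (Fin n) :=
  (List.range w.length).filterMap fun i => w[i]?.bind (up (w.take i).toFinset)

/-- The "arrow" maps: `arrow w 0 i = w_i`, and
`arrow w l i = (arrow w (l-1) i)↑_{supp(δ^{l-1}(w_{≤ i}))}` (positions 0-indexed). -/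
def arrow {n : ℕ} (w : List (Fin n)) : ℕ → ℕ → Option (Fin n)
  | 0, i => w[i]?
  | k + 1, i => (arrow w k i).bind (up (delta^[k] (w.take (i + 1))).toFinset)

/-- `w` has a strictly decreasing subsequence of length `k` all of whose letters `a`
satisfy `i ≤ ā < j`. -/
def HasDecrSubseq {n : ℕ} (w : List (Fin n)) (i j : Fin (n + 1)) (k : ℕ) : Prop :=
  ∃ (s : Fin k → ℕ) (hs : ∀ l, s l < w.length),
    StrictMono s ∧
    (∀ l m : Fin k, l < m → w[s m]'(hs m) < w[s l]'(hs l)) ∧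
    ∀ l : Fin k, i ≤ bar (w[s l]'(hs l)) ∧ bar (w[s l]'(hs l)) < j

/-- The involution on words: reverse and replace each letter `a` by `n + 1 - a`. -/
def wordStar {n : ℕ} (w : List (Fin n)) : List (Fin n) :=
  w.reverse.map fun a => ⟨n - 1 - a.val, by have := a.isLt; omega⟩

/-- Skew transposition of an `(m+1) × (m+1)` tropical matrix. -/
def skewT {m : ℕ} (A : Matrix (Fin (m + 1)) (Fin (m + 1)) Trop) :
    Matrix (Fin (m + 1)) (Fin (m + 1)) Trop :=
  fun i j => A ⟨m - j.val, by omega⟩ ⟨m - i.val, by omega⟩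

/-! Applying δ to a prefix ending in `b` appends `b` raised in the support of the rest; since
adding `b` itself to that support does not change `b↑`, induction on `k` shows that
`δ^k(w_{≤ j+1}) = δ^k(w_{≤ j}) · ↑^k_w(j+1)`. Hence `δ^k(w)` is the word
`↑^k_w(1) ⋯ ↑^k_w(|w|)` with the ε's dropped, and its support is the set of these letters. -/

lemma delta_nil {n : ℕ} : delta ([] : List (Fin n)) = [] := rfl

lemma delta_append_singleton {n : ℕ} (u : List (Fin n)) (a : Fin n) :
    delta (u ++ [a]) = delta u ++ (up u.toFinset a).toList := by
  unfold delta
  rw [List.length_append, List.length_singleton, List.range_succ, List.filterMap_append]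
  congr 1
  · refine List.filterMap_congr fun i hi => ?_
    rw [List.mem_range] at hi
    rw [List.getElem?_append_left hi, List.take_append_of_le_length hi.le]
  · cases h : up u.toFinset a <;> simp [h]

lemma up_insert_self {n : ℕ} (B : Finset (Fin n)) (b : Fin n) :
    up (insert b B) b = up B b := by
  have hfilter : (insert b B).filter (b < ·) = B.filter (b < ·) := by
    rw [Finset.filter_insert, if_neg (lt_irrefl b)]
  unfold up
  rw [hfilter]

lemma delta_iterate_take_add_one {n : ℕ} (w : List (Fin n)) (k j : ℕ) :
    delta^[k] (w.take (j + 1)) = delta^[k] (w.take j) ++ (arrow w k j).toList := by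
  induction k with
  | zero => simp [arrow, List.take_add_one]
  | succ k ih =>
    rw [Function.iterate_succ_apply', Function.iterate_succ_apply', ih]
    cases hb : arrow w k j with
    | none => simp [arrow, hb]
    | some b =>
      have harrow : arrow w (k + 1) j = up (delta^[k] (w.take j) ++ [b]).toFinset b := by
        rw [arrow, hb, ih, hb]
        rfl
      rw [Option.toList_some, delta_append_singleton, harrow, List.toFinset_append,
        List.toFinset_cons, List.toFinset_nil, insert_empty_eq, Finset.union_singleton,
        up_insert_self]

lemma delta_iterate_eq_filterMap_arrow {n : ℕ} (w : List (Fin n)) (k : ℕ) :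
    delta^[k] w = (List.range w.length).filterMap (arrow w k) := by
  have hprefix : ∀ j, delta^[k] (w.take j) = (List.range j).filterMap (arrow w k) := by
    intro j
    induction j with
    | zero => simp [Function.iterate_fixed delta_nil]
    | succ j ih =>
      rw [delta_iterate_take_add_one, ih, List.range_succ, List.filterMap_append]
      cases h : arrow w k j <;> simp [h]
  simpa using hprefix w.length

theorem mem_row_iff_arrow_general
    (n : ℕ) (w : List (Fin n)) (a : Fin n) (k : ℕ) :
    a ∈ (delta^[k - 1] w).toFinset ↔ ∃ j < w.length, arrow w (k - 1) j = some a := by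
  simp [delta_iterate_eq_filterMap_arrow]

/-- A letter `a` occurs in the `k`-th row of `N(w)`, i.e. in `supp(δ^{k-1}(w))`,
iff there is a (0-indexed) position `j < |w|` with `↑^{k-1}_w(j) = a`. -/
theorem mem_row_iff_arrow
    (n : ℕ) (hn : 1 ≤ n) (w : List (Fin n)) (a : Fin n) (k : ℕ) (hk : 1 ≤ k) :
    a ∈ (delta^[k - 1] w).toFinset ↔ ∃ j < w.length, arrow w (k - 1) j = some a :=
  mem_row_iff_arrow_general n w a k
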